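/- arXiv:1503.00751 — 2 statements merged into one kernel-verified Lean document; each statement's English description precedes it below -/
import Mathlib

section
/- Let S ⊂ Γ(TΩ) × ([0,∞)^ν \ {0}) be such that for every M the set {(X,d) ∈ S : |d|_∞ ≤ M} is finite, and suppose that for each 1 ≤ μ ≤ ν the collection {X : (X,d) ∈ S and d_{μ′} = 0 for all μ′ ≠ μ} satisfies Hörmander's condition on Ω. Then L(S), the closure of S under the operation ((X_1,d_1),(X_2,d_2)) ↦ ([X_1,X_2], d_1+d_2), is smoothly finitely generated on Ω′: there is a finite set F ⊂ L(S), namely F = {(X,d) ∈ L(S) : |d|_∞ ≤ M} for suitable M, which smoothly controls L(S) on Ω′ and is smoothly controlled by L(S). -/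
open MeasureTheory
open scoped BigOperators Classical

noncomputable section

/-- Points of `ℝ^m`. -/
abbrev Pt (m : ℕ) := Fin m → ℝ

/-- Vector fields on `ℝ^n` (defined on all of `ℝ^n`; smoothness on the relevant open set
is imposed as a hypothesis where needed). -/
abbrev VF (n : ℕ) := Pt n → Pt n

/-- First-order partial derivative in the `j`-th coordinate direction. -/
noncomputable def pdv {m : ℕ} {E : Type*} [NormedAddCommGroup E] [NormedSpace ℝ E]
    (j : Fin m) (f : Pt m → E) : Pt m → E :=
  fun x => fderiv ℝ f x (Pi.single j 1)

/-- Iterated partial derivative `∂^α`. -/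
noncomputable def md {m : ℕ} {E : Type*} [NormedAddCommGroup E] [NormedSpace ℝ E]
    (α : Fin m → ℕ) (f : Pt m → E) : Pt m → E :=
  (List.finRange m).foldr (fun j g => (pdv j)^[α j] g) f

/-- `δ^d = ∏_μ δ_μ^{d_μ}` (real exponents). -/
noncomputable def dpow {ν : ℕ} (δ d : Fin ν → ℝ) : ℝ := ∏ μ, (δ μ) ^ (d μ)

/-- The unit cube `[0,1]^ν` of multi-parameter radii. -/
def unitCube (ν : ℕ) : Set (Fin ν → ℝ) := {δ | ∀ μ, 0 ≤ δ μ ∧ δ μ ≤ 1}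

/-- `d ∈ 𝔡_ν`: the degree `d` is nonzero in precisely one component. -/
def InD {ν : ℕ} (d : Fin ν → ℝ) : Prop :=
  ∃ μ, d μ ≠ 0 ∧ ∀ μ', μ' ≠ μ → d μ' = 0

/-- Lie bracket of vector fields. -/
noncomputable def vbracket {n : ℕ} (V W : VF n) : VF n :=
  fun x => fderiv ℝ W x (V x) - fderiv ℝ V x (W x)

/-- The unit-scale Carnot–Carathéodory ball of the finite family `Z` centred at `x₀`. -/
def CCBall {n q : ℕ} (Z : Fin q → VF n) (x₀ : Pt n) : Set (Pt n) :=
  {y | ∃ γ : ℝ → Pt n, ∃ a : Fin q → ℝ → ℝ,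
    γ 0 = x₀ ∧ γ 1 = y ∧ (∀ t : ℝ, (∑ j, (a j t) ^ 2) < 1) ∧
    IntervalIntegrable (fun s => ∑ j, a j s • Z j (γ s)) volume 0 1 ∧
    ∀ t ∈ Set.Icc (0 : ℝ) 1,
      γ t = x₀ + ∫ s in (0 : ℝ)..t, ∑ j, a j s • Z j (γ s)}

/-- The multi-parameter Carnot–Carathéodory ball `B_{(X,d)}(x₀,δ)`. -/
def MBall {n ν q : ℕ} (X : Fin q → VF n) (d : Fin q → Fin ν → ℝ)
    (x₀ : Pt n) (δ : Fin ν → ℝ) : Set (Pt n) :=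
  CCBall (fun j x => dpow δ (d j) • X j x) x₀

/-- Derivative of a function along a vector field. -/
noncomputable def vfD {n : ℕ} (V : VF n) (f : Pt n → ℝ) : Pt n → ℝ :=
  fun x => fderiv ℝ f x (V x)

/-- Iterated derivative along a list of vector fields. -/
noncomputable def listD {n : ℕ} (Vs : List (VF n)) (f : Pt n → ℝ) : Pt n → ℝ :=
  Vs.foldr vfD f

/-- `(X,d)` controls `(X₀,h)` on `Ω'`:  there is `τ > 0` so that for every `δ ∈ [0,1]^ν`
and `x ∈ Ω'` one can write `h(δ)·X₀ = Σ_j c_j δ^{d_j} X_j` on `B_{(X,d)}(x, τδ)` with all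
iterated `(δX)`-derivatives of the coefficients uniformly bounded. -/
def ControlsH {n ν q : ℕ} (X : Fin q → VF n) (d : Fin q → Fin ν → ℝ)
    (X₀ : VF n) (h : (Fin ν → ℝ) → ℝ) (Ω' : Set (Pt n)) : Prop :=
  ∃ τ : ℝ, 0 < τ ∧ ∃ c : (Fin ν → ℝ) → Pt n → Fin q → Pt n → ℝ,
    (∀ δ ∈ unitCube ν, ∀ x ∈ Ω',
      (∀ j, ContinuousOn (c δ x j) (MBall X d x (fun μ => τ * δ μ))) ∧
      ∀ y ∈ MBall X d x (fun μ => τ * δ μ),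
        h δ • X₀ y = ∑ j, c δ x j y • (dpow δ (d j) • X j y)) ∧
    (∀ m : ℕ, ∃ C : ℝ, ∀ δ ∈ unitCube ν, ∀ x ∈ Ω', ∀ j, ∀ L : List (Fin q),
      L.length ≤ m → ∀ y ∈ MBall X d x (fun μ => τ * δ μ),
        |listD (L.map (fun i z => dpow δ (d i) • X i z)) (c δ x j) y| ≤ C)

/-- `(X,d)` controls the pair `(X₀,d₀)` on `Ω'`. -/
def ControlsPair {n ν q : ℕ} (X : Fin q → VF n) (d : Fin q → Fin ν → ℝ)
    (p : VF n × (Fin ν → ℝ)) (Ω' : Set (Pt n)) : Prop :=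
  ControlsH X d p.1 (fun δ => dpow δ p.2) Ω'

/-- `(X,d)` smoothly controls `(X₀,h)` on `Ω'` (relative to the ambient open set `Ω`). -/
def SmoothControlsH {n ν q : ℕ} (X : Fin q → VF n) (d : Fin q → Fin ν → ℝ)
    (X₀ : VF n) (h : (Fin ν → ℝ) → ℝ) (Ω' Ω : Set (Pt n)) : Prop :=
  ∃ Ω'' : Set (Pt n), IsOpen Ω'' ∧ closure Ω' ⊆ Ω'' ∧ closure Ω'' ⊆ Ω ∧
    ∃ c : (Fin ν → ℝ) → Fin q → Pt n → ℝ,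
      (∀ δ ∈ unitCube ν, ∀ j, ContDiffOn ℝ (⊤ : ℕ∞) (c δ j) Ω'') ∧
      (∀ δ ∈ unitCube ν, ∀ y ∈ Ω'',
        h δ • X₀ y = ∑ j, c δ j y • (dpow δ (d j) • X j y)) ∧
      (∀ α : Fin n → ℕ, ∃ C : ℝ, ∀ δ ∈ unitCube ν, ∀ j, ∀ y ∈ Ω'',
        |md α (c δ j) y| ≤ C)

/-- `(X,d)` smoothly controls the pair `(X₀,d₀)` on `Ω'`. -/
def SmoothControlsPair {n ν q : ℕ} (X : Fin q → VF n) (d : Fin q → Fin ν → ℝ)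
    (p : VF n × (Fin ν → ℝ)) (Ω' Ω : Set (Pt n)) : Prop :=
  SmoothControlsH X d p.1 (fun δ => dpow δ p.2) Ω' Ω

/-- A (possibly infinite) set `S` controls a pair: some finite subfamily of `S` does. -/
def SetControlsPair {n ν : ℕ} (S : Set (VF n × (Fin ν → ℝ)))
    (p : VF n × (Fin ν → ℝ)) (Ω' : Set (Pt n)) : Prop :=
  ∃ q : ℕ, ∃ X : Fin q → VF n, ∃ d : Fin q → Fin ν → ℝ,
    (∀ j, (X j, d j) ∈ S) ∧ ControlsPair X d p Ω'

def SetSmoothControlsPair {n ν : ℕ} (S : Set (VF n × (Fin ν → ℝ)))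
    (p : VF n × (Fin ν → ℝ)) (Ω' Ω : Set (Pt n)) : Prop :=
  ∃ q : ℕ, ∃ X : Fin q → VF n, ∃ d : Fin q → Fin ν → ℝ,
    (∀ j, (X j, d j) ∈ S) ∧ SmoothControlsPair X d p Ω' Ω

def SetControlsSet {n ν : ℕ} (S T : Set (VF n × (Fin ν → ℝ)))
    (Ω' : Set (Pt n)) : Prop :=
  ∀ p ∈ T, SetControlsPair S p Ω'

def SetSmoothControlsSet {n ν : ℕ} (S T : Set (VF n × (Fin ν → ℝ)))
    (Ω' Ω : Set (Pt n)) : Prop :=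
  ∀ p ∈ T, SetSmoothControlsPair S p Ω' Ω

/-- `S` and `T` are equivalent on `Ω'`: each controls the other. -/
def EquivSets {n ν : ℕ} (S T : Set (VF n × (Fin ν → ℝ))) (Ω' : Set (Pt n)) : Prop :=
  SetControlsSet S T Ω' ∧ SetControlsSet T S Ω'

def EquivSetsS {n ν : ℕ} (S T : Set (VF n × (Fin ν → ℝ))) (Ω' Ω : Set (Pt n)) : Prop :=
  SetSmoothControlsSet S T Ω' Ω ∧ SetSmoothControlsSet T S Ω' Ω

/-- The Lie-bracket generated set `L(S)` as an inductive predicate. -/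
inductive genLie {n ν : ℕ} (S : Set (VF n × (Fin ν → ℝ))) :
    VF n × (Fin ν → ℝ) → Prop
  | base (p : VF n × (Fin ν → ℝ)) : p ∈ S → genLie S p
  | br (p q : VF n × (Fin ν → ℝ)) : genLie S p → genLie S q →
      genLie S (vbracket p.1 q.1, p.2 + q.2)

/-- `L(S)`: the smallest set containing `S` closed under `([X₁,X₂], d₁+d₂)`. -/
def LSet {n ν : ℕ} (S : Set (VF n × (Fin ν → ℝ))) : Set (VF n × (Fin ν → ℝ)) :=
  {p | genLie S p}

/-- Membership in the Lie algebra generated by a set of vector fields. -/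
inductive lieGen {n : ℕ} (V : Set (VF n)) : VF n → Prop
  | base (X : VF n) : X ∈ V → lieGen V X
  | br (X Y : VF n) : lieGen V X → lieGen V Y → lieGen V (vbracket X Y)

/-- Hörmander's condition for `V` on `U`: the Lie algebra generated by `V` spans the
tangent space at every point of `U`. -/
def Hormander {n : ℕ} (V : Set (VF n)) (U : Set (Pt n)) : Prop :=
  ∀ x ∈ U, Submodule.span ℝ {v : Pt n | ∃ X, lieGen V X ∧ v = X x} = ⊤

/-- Brackets of depth at most `m` (so `LD S m` corresponds to the paper's `L_{m+1}(S)`). -/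
inductive genLieD {n ν : ℕ} (S : Set (VF n × (Fin ν → ℝ))) :
    ℕ → VF n × (Fin ν → ℝ) → Prop
  | base (p : VF n × (Fin ν → ℝ)) : p ∈ S → genLieD S 0 p
  | mono (m : ℕ) (p : VF n × (Fin ν → ℝ)) : genLieD S m p → genLieD S (m + 1) p
  | br (k l : ℕ) (p q : VF n × (Fin ν → ℝ)) : genLieD S k p → genLieD S l q →
      genLieD S (k + l + 1) (vbracket p.1 q.1, p.2 + q.2)

def LD {n ν : ℕ} (S : Set (VF n × (Fin ν → ℝ))) (m : ℕ) :
    Set (VF n × (Fin ν → ℝ)) :=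
  {p | genLieD S m p}

/-- `π_μ S`: the elements of `S` whose degree is nonzero only in the `μ`-th component. -/
def piMu {n ν : ℕ} (μ : Fin ν) (S : Set (VF n × (Fin ν → ℝ))) :
    Set (VF n × (Fin ν → ℝ)) :=
  {p ∈ S | ∀ μ', μ' ≠ μ → p.2 μ' = 0}

/-- `σ_K S`: the elements of `S` of degree `|d|₁ ≤ K`. -/
def sigmaK {n ν : ℕ} (K : ℝ) (S : Set (VF n × (Fin ν → ℝ))) :
    Set (VF n × (Fin ν → ℝ)) :=
  {p ∈ S | (∑ μ, |p.2 μ|) ≤ K}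

/-- The multi-parameter dilation `δ t` on `ℝ^N` with exponents `e`. -/
noncomputable def dilVec {N ν : ℕ} (e : Fin N → Fin ν → ℝ) (δ : Fin ν → ℝ)
    (t : Pt N) : Pt N :=
  fun k => dpow δ (e k) * t k

/-- `(X,d)` controls the vector field parameterization `(W,e,N)` on `Ω'`. -/
def ControlsParamH {n ν q N : ℕ} (X : Fin q → VF n) (d : Fin q → Fin ν → ℝ)
    (W : Pt N → VF n) (e : Fin N → Fin ν → ℝ) (Ω' : Set (Pt n)) : Prop :=
  ∃ τ : ℝ, 0 < τ ∧ ∃ ρ₁ : ℝ, 0 < ρ₁ ∧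
    ∃ c : (Fin ν → ℝ) → Pt n → Fin q → Pt N → Pt n → ℝ,
      (∀ δ ∈ unitCube ν, ∀ x₀ ∈ Ω', ∀ t : Pt N, ‖t‖ < ρ₁ →
        ∀ x ∈ MBall X d x₀ (fun μ => τ * δ μ),
          W (dilVec e δ t) x = ∑ j, c δ x₀ j t x • (dpow δ (d j) • X j x)) ∧
      (∀ m : ℕ, ∃ C : ℝ, ∀ δ ∈ unitCube ν, ∀ x₀ ∈ Ω', ∀ j, ∀ L : List (Fin q),
        ∀ β : Fin N → ℕ, L.length + (∑ k, β k) ≤ m → ∀ t : Pt N, ‖t‖ < ρ₁ →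
          ∀ x ∈ MBall X d x₀ (fun μ => τ * δ μ),
            |listD (L.map (fun i z => dpow δ (d i) • X i z))
              (fun z => md β (fun t' => c δ x₀ j t' z) t) x| ≤ C)

/-- `(X,d)` smoothly controls the vector field parameterization `(W,e,N)` on `Ω'`. -/
def SmoothControlsParamH {n ν q N : ℕ} (X : Fin q → VF n) (d : Fin q → Fin ν → ℝ)
    (W : Pt N → VF n) (e : Fin N → Fin ν → ℝ) (Ω' Ω : Set (Pt n)) : Prop :=
  ∃ Ω'' : Set (Pt n), IsOpen Ω'' ∧ closure Ω' ⊆ Ω'' ∧ closure Ω'' ⊆ Ω ∧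
  ∃ ρ₁ : ℝ, 0 < ρ₁ ∧
  ∃ c : (Fin ν → ℝ) → Fin q → Pt N → Pt n → ℝ,
    (∀ δ ∈ unitCube ν, ∀ j, ContDiffOn ℝ (⊤ : ℕ∞)
      (fun p : Pt N × Pt n => c δ j p.1 p.2) (Metric.ball 0 ρ₁ ×ˢ Ω'')) ∧
    (∀ δ ∈ unitCube ν, ∀ t : Pt N, ‖t‖ < ρ₁ → ∀ y ∈ Ω'',
      W (dilVec e δ t) y = ∑ j, c δ j t y • (dpow δ (d j) • X j y)) ∧
    (∀ α : Fin n → ℕ, ∀ β : Fin N → ℕ, ∃ C : ℝ, ∀ δ ∈ unitCube ν, ∀ j,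
      ∀ t : Pt N, ‖t‖ < ρ₁ → ∀ y ∈ Ω'',
        |md α (fun z => md β (fun t' => c δ j t' z) t) y| ≤ C)

def SetControlsParam {n ν N : ℕ} (S : Set (VF n × (Fin ν → ℝ)))
    (W : Pt N → VF n) (e : Fin N → Fin ν → ℝ) (Ω' : Set (Pt n)) : Prop :=
  ∃ q : ℕ, ∃ X : Fin q → VF n, ∃ d : Fin q → Fin ν → ℝ,
    (∀ j, (X j, d j) ∈ S) ∧ ControlsParamH X d W e Ω'

def SetSmoothControlsParam {n ν N : ℕ} (S : Set (VF n × (Fin ν → ℝ)))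
    (W : Pt N → VF n) (e : Fin N → Fin ν → ℝ) (Ω' Ω : Set (Pt n)) : Prop :=
  ∃ q : ℕ, ∃ X : Fin q → VF n, ∃ d : Fin q → Fin ν → ℝ,
    (∀ j, (X j, d j) ∈ S) ∧ SmoothControlsParamH X d W e Ω' Ω

/-- `α! = ∏ (α_k)!`. -/
def mfact {N : ℕ} (α : Fin N → ℕ) : ℝ := ∏ k, (Nat.factorial (α k) : ℝ)

/-- The Taylor coefficient `X_α` of `W(t) ~ Σ_{|α|>0} t^α X_α`. -/
noncomputable def taylorC {n N : ℕ} (W : Pt N → VF n) (α : Fin N → ℕ) : VF n :=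
  fun x => (mfact α)⁻¹ • md α (fun t => W t x) 0

/-- `deg(α) = Σ_k α_k e_k`. -/
def degA {N ν : ℕ} (e : Fin N → Fin ν → ℝ) (α : Fin N → ℕ) : Fin ν → ℝ :=
  fun μ => ∑ k, (α k : ℝ) * e k μ

/-- The set `𝒮 = {(X_α, deg α) : deg α ∈ 𝔡_ν}` of a vector field parameterization. -/
def TaylorS {n N ν : ℕ} (W : Pt N → VF n) (e : Fin N → Fin ν → ℝ) :
    Set (VF n × (Fin ν → ℝ)) :=
  {p | ∃ α : Fin N → ℕ, α ≠ 0 ∧ InD (degA e α) ∧ p = (taylorC W α, degA e α)}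

/-- The set `𝒱 = {(X_α, deg α) : |α| > 0}` of a vector field parameterization. -/
def TaylorV {n N ν : ℕ} (W : Pt N → VF n) (e : Fin N → Fin ν → ℝ) :
    Set (VF n × (Fin ν → ℝ)) :=
  {p | ∃ α : Fin N → ℕ, α ≠ 0 ∧ p = (taylorC W α, degA e α)}

/-- `𝓕₀ = {(X_α, deg α) : deg α ∈ 𝔡_ν, |α| = 1}`: the first-order Taylor coefficients. -/
def TaylorF0 {n N ν : ℕ} (W : Pt N → VF n) (e : Fin N → Fin ν → ℝ) :
    Set (VF n × (Fin ν → ℝ)) :=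
  {p | ∃ α : Fin N → ℕ, (∑ k, α k) = 1 ∧ InD (degA e α) ∧
    p = (taylorC W α, degA e α)}

/-- `T` is finitely generated by `F` on `Ω'`. -/
def SetFinGenBy {n ν : ℕ} (T F : Set (VF n × (Fin ν → ℝ))) (Ω' : Set (Pt n)) : Prop :=
  F.Finite ∧ EquivSets F T Ω'

def SetFinGen {n ν : ℕ} (T : Set (VF n × (Fin ν → ℝ))) (Ω' : Set (Pt n)) : Prop :=
  ∃ F, SetFinGenBy T F Ω'

def SetSmoothFinGenBy {n ν : ℕ} (T F : Set (VF n × (Fin ν → ℝ)))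
    (Ω' Ω : Set (Pt n)) : Prop :=
  F.Finite ∧ EquivSetsS F T Ω' Ω

def SetSmoothFinGen {n ν : ℕ} (T : Set (VF n × (Fin ν → ℝ)))
    (Ω' Ω : Set (Pt n)) : Prop :=
  ∃ F, SetSmoothFinGenBy T F Ω' Ω

def SetLinFinGen {n ν : ℕ} (T : Set (VF n × (Fin ν → ℝ))) (Ω' : Set (Pt n)) : Prop :=
  ∃ F, (∀ p ∈ F, InD p.2) ∧ SetFinGenBy T F Ω'

def SetSmoothLinFinGen {n ν : ℕ} (T : Set (VF n × (Fin ν → ℝ)))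
    (Ω' Ω : Set (Pt n)) : Prop :=
  ∃ F, (∀ p ∈ F, InD p.2) ∧ SetSmoothFinGenBy T F Ω' Ω

/-- `(W,e,N)` is finitely generated by `F` on `Ω'`. -/
def ParamFinGenBy {n ν N : ℕ} (W : Pt N → VF n) (e : Fin N → Fin ν → ℝ)
    (F : Set (VF n × (Fin ν → ℝ))) (Ω' : Set (Pt n)) : Prop :=
  SetControlsParam (LSet (TaylorS W e)) W e Ω' ∧ SetFinGenBy (LSet (TaylorS W e)) F Ω'

def ParamFinGen {n ν N : ℕ} (W : Pt N → VF n) (e : Fin N → Fin ν → ℝ)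
    (Ω' : Set (Pt n)) : Prop :=
  SetControlsParam (LSet (TaylorS W e)) W e Ω' ∧ SetFinGen (LSet (TaylorS W e)) Ω'

def ParamSmoothFinGenBy {n ν N : ℕ} (W : Pt N → VF n) (e : Fin N → Fin ν → ℝ)
    (F : Set (VF n × (Fin ν → ℝ))) (Ω' Ω : Set (Pt n)) : Prop :=
  SetSmoothControlsParam (LSet (TaylorS W e)) W e Ω' Ω ∧
    SetSmoothFinGenBy (LSet (TaylorS W e)) F Ω' Ω

def ParamSmoothFinGen {n ν N : ℕ} (W : Pt N → VF n) (e : Fin N → Fin ν → ℝ)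
    (Ω' Ω : Set (Pt n)) : Prop :=
  SetSmoothControlsParam (LSet (TaylorS W e)) W e Ω' Ω ∧
    SetSmoothFinGen (LSet (TaylorS W e)) Ω' Ω

/-- `F` satisfies `𝒟(Ω')`: it controls all brackets of its own elements. -/
def DCondSet {n ν : ℕ} (F : Set (VF n × (Fin ν → ℝ))) (Ω' : Set (Pt n)) : Prop :=
  ∀ p ∈ F, ∀ p' ∈ F, SetControlsPair F (vbracket p.1 p'.1, p.2 + p'.2) Ω'

/-- `F` satisfies `𝒟_s(Ω')`: it smoothly controls all brackets of its own elements. -/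
def DsCondSet {n ν : ℕ} (F : Set (VF n × (Fin ν → ℝ))) (Ω' Ω : Set (Pt n)) : Prop :=
  ∀ p ∈ F, ∀ p' ∈ F, SetSmoothControlsPair F (vbracket p.1 p'.1, p.2 + p'.2) Ω' Ω

/-- `(W,e,N)` is linearly finitely generated by `F` on `Ω'`. -/
def ParamLinFinGenBy {n ν N : ℕ} (W : Pt N → VF n) (e : Fin N → Fin ν → ℝ)
    (F : Set (VF n × (Fin ν → ℝ))) (Ω' : Set (Pt n)) : Prop :=
  DCondSet (TaylorF0 W e) Ω' ∧ SetControlsParam (TaylorF0 W e) W e Ω' ∧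
    EquivSets (TaylorF0 W e) F Ω'

/-- `(W,e,N)` is smoothly linearly finitely generated by `F` on `Ω'`. -/
def ParamSmoothLinFinGenBy {n ν N : ℕ} (W : Pt N → VF n) (e : Fin N → Fin ν → ℝ)
    (F : Set (VF n × (Fin ν → ℝ))) (Ω' Ω : Set (Pt n)) : Prop :=
  DsCondSet (TaylorF0 W e) Ω' Ω ∧ SetSmoothControlsParam (TaylorF0 W e) W e Ω' Ω ∧
    EquivSetsS (TaylorF0 W e) F Ω' Ω

/-!
Degrees are nonnegative, and the finitely many elements of `S` of degree at most `M` have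
degree sums `∑ μ, d μ` at least some `ε > 0`; so an element of `L(S)` of degree at most `M` is an
iterated bracket of at most `ν M / ε` such generators, and there are finitely many of those.

By Hörmander's condition and compactness of `closure Ω'`, for each `μ` finitely many elements
`(Yᵢ, dᵢ)` of `L(S)` with `dᵢ` supported in `μ` span the tangent space on a neighbourhood of
`closure Ω'`; choose `M` above all the `dᵢ`. If `(X, d) ∈ L(S)` has `d μ > M`, then `dᵢ ≤ d`, and
writing `X = ∑ aᵢ Yᵢ` with smooth `aᵢ` (obtained by inverting `∑ᵢ Yᵢ Yᵢᵀ`)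
gives `δ^d X = ∑ (δ^(d - dᵢ) aᵢ) δ^(dᵢ) Yᵢ` with `δ^(d - dᵢ) ≤ 1`. All other elements of `L(S)`
lie in `F` and control themselves.
-/

section PartialDerivatives

variable {m : ℕ} {E : Type*} [NormedAddCommGroup E] [NormedSpace ℝ E]

lemma md_induction {P : (Pt m → E) → Prop} (hP : ∀ j f, P f → P (pdv j f))
    (α : Fin m → ℕ) {f : Pt m → E} (hf : P f) : P (md α f) := by
  unfold md
  induction List.finRange m with
  | nil => exact hf
  | cons j L ih => exact Function.Iterate.rec P ih (hP j) (α j)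

lemma pdv_const_smul (j : Fin m) (c : ℝ) (f : Pt m → E) : pdv j (c • f) = c • pdv j f := by
  funext x
  simp [pdv, fderiv_const_smul_field]

lemma md_const_smul (α : Fin m → ℕ) (c : ℝ) (f : Pt m → E) : md α (c • f) = c • md α f := by
  unfold md
  induction List.finRange m with
  | nil => rfl
  | cons j L ih =>
    simp only [List.foldr_cons, ih]
    exact Function.Commute.iterate_left (fun g => pdv_const_smul j c g) (α j) _

lemma contDiffOn_pdv {U : Set (Pt m)} (hU : IsOpen U) {f : Pt m → E}
    (hf : ContDiffOn ℝ (⊤ : ℕ∞) f U) (j : Fin m) : ContDiffOn ℝ (⊤ : ℕ∞) (pdv j f) U :=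
  (hf.fderiv_of_isOpen hU (by simp)).clm_apply contDiffOn_const

lemma contDiffOn_md {U : Set (Pt m)} (hU : IsOpen U) {f : Pt m → E}
    (hf : ContDiffOn ℝ (⊤ : ℕ∞) f U) (α : Fin m → ℕ) : ContDiffOn ℝ (⊤ : ℕ∞) (md α f) U :=
  md_induction (P := (ContDiffOn ℝ (⊤ : ℕ∞) · U)) (fun j _ h => contDiffOn_pdv hU h j) α hf

end PartialDerivatives

section Dpow

variable {ν : ℕ} {δ d e : Fin ν → ℝ}

lemma dpow_nonneg (hδ : 0 ≤ δ) : 0 ≤ dpow δ d :=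
  Finset.prod_nonneg fun μ _ => Real.rpow_nonneg (hδ μ) _

lemma dpow_le_one (hδ : δ ∈ unitCube ν) (hd : 0 ≤ d) : dpow δ d ≤ 1 :=
  Finset.prod_le_one (fun μ _ => Real.rpow_nonneg (hδ μ).1 _)
    (fun μ _ => Real.rpow_le_one (hδ μ).1 (hδ μ).2 (hd μ))

lemma dpow_add (hδ : 0 ≤ δ) (hd : 0 ≤ d) (he : 0 ≤ e) :
    dpow δ (d + e) = dpow δ d * dpow δ e := by
  simp only [dpow, Pi.add_apply, Real.rpow_add_of_nonneg (hδ _) (hd _) (he _),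
    Finset.prod_mul_distrib]

end Dpow

section SmoothControl

variable {n ν q : ℕ} {Ω Ω' U : Set (Pt n)}

lemma smoothControlsH_of_eq_sum (hU : IsOpen U) (hK : IsCompact (closure Ω'))
    (hKU : closure Ω' ⊆ U) (hUΩ : U ⊆ Ω) {X : Fin q → VF n} {d : Fin q → Fin ν → ℝ}
    {X₀ : VF n} {h : (Fin ν → ℝ) → ℝ} (a : Fin q → Pt n → ℝ)
    (ha : ∀ j, ContDiffOn ℝ (⊤ : ℕ∞) (a j) U) (s : (Fin ν → ℝ) → Fin q → ℝ)
    (hs : ∀ δ ∈ unitCube ν, ∀ j, |s δ j| ≤ 1)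
    (hrep : ∀ δ ∈ unitCube ν, ∀ y ∈ U,
      h δ • X₀ y = ∑ j, (s δ j * a j y) • (dpow δ (d j) • X j y)) :
    SmoothControlsH X d X₀ h Ω' Ω := by
  obtain ⟨L, hL, hKL, hLU⟩ := exists_compact_between hK hU hKU
  have hclL : closure (interior L) ⊆ L := closure_minimal interior_subset hL.isClosed
  refine ⟨interior L, isOpen_interior, hKL, hclL.trans (hLU.trans hUΩ),
    fun δ j => s δ j • a j, fun δ _ j => (contDiffOn_const.smul (ha j)).mono
      (interior_subset.trans hLU),
    fun δ hδ y hy => hrep δ hδ y (hLU (interior_subset hy)), fun α => ?_⟩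
  have hcont : ContinuousOn (fun y j => md α (a j) y) L :=
    continuousOn_pi.2 fun j => (contDiffOn_md hU (ha j) α).continuousOn.mono hLU
  obtain ⟨C, hC⟩ := hL.exists_bound_of_continuousOn hcont
  refine ⟨C, fun δ hδ j y hy => ?_⟩
  have hy' : |md α (a j) y| ≤ C :=
    (norm_le_pi_norm (fun j => md α (a j) y) j).trans (hC y (interior_subset hy))
  rw [md_const_smul, Pi.smul_apply, smul_eq_mul, abs_mul]
  exact (mul_le_of_le_one_left (abs_nonneg _) (hs δ hδ j)).trans hy'

end SmoothControl

section Frames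

open Matrix

variable {ι : Type*} {n : ℕ}

lemma injective_mulVec_of_span_eq_top {v : ι → Pt n} (hv : Submodule.span ℝ (Set.range v) = ⊤) :
    Function.Injective (of v).mulVec := by
  intro x y hxy
  have horth : (dotProductBilin ℝ ℝ).flip (x - y) = 0 :=
    LinearMap.ext_on_range hv fun i => by
      simpa [mulVec, dotProduct_sub, sub_eq_zero] using congrFun hxy i
  exact sub_eq_zero.1 (dotProduct_self_eq_zero.1 (LinearMap.congr_fun horth (x - y)))

variable [Fintype ι]

lemma det_transpose_mul_self_ne_zero {v : ι → Pt n}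
    (hv : Submodule.span ℝ (Set.range v) = ⊤) : ((of v)ᵀ * of v).det ≠ 0 := by
  have := PosDef.conjTranspose_mul_self (of v) (injective_mulVec_of_span_eq_top hv)
  rw [conjTranspose_eq_transpose_of_trivial] at this
  exact this.det_pos.ne'

/-- With `A` the matrix whose rows are the `vᵢ`, `c ↦ ∑ cᵢ • vᵢ` is `Aᵀ`, and `A (AᵀA)⁻¹` is a
right inverse of it. -/
lemma eq_sum_smul_of_det_ne_zero {v : ι → Pt n} (hv : ((of v)ᵀ * of v).det ≠ 0) (x : Pt n) :
    x = ∑ i, (of v *ᵥ (((of v)ᵀ * of v)⁻¹ *ᵥ x)) i • v i := by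
  calc x = ((of v)ᵀ * of v) *ᵥ (((of v)ᵀ * of v)⁻¹ *ᵥ x) := by
        rw [mulVec_mulVec, mul_nonsing_inv _ (isUnit_iff_ne_zero.2 hv), one_mulVec]
    _ = _ := by rw [← mulVec_mulVec, mulVec_transpose, vecMul_eq_sum]; rfl

lemma span_eq_top_iff_det_ne_zero {v : ι → Pt n} :
    Submodule.span ℝ (Set.range v) = ⊤ ↔ ((of v)ᵀ * of v).det ≠ 0 := by
  refine ⟨det_transpose_mul_self_ne_zero, fun hv => Submodule.eq_top_iff'.2 fun x => ?_⟩
  rw [eq_sum_smul_of_det_ne_zero hv x]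
  exact Submodule.sum_mem _ fun i _ =>
    Submodule.smul_mem _ _ (Submodule.subset_span ⟨i, rfl⟩)

variable {E : Type*} [NormedAddCommGroup E] [NormedSpace ℝ E] {U : Set E} {k : WithTop ℕ∞}

lemma contDiffOn_matrix_det [DecidableEq ι] {A : E → Matrix ι ι ℝ}
    (hA : ∀ i j, ContDiffOn ℝ k (fun y => A y i j) U) :
    ContDiffOn ℝ k (fun y => (A y).det) U := by
  simp only [det_apply']
  exact ContDiffOn.sum fun σ _ => contDiffOn_const.mul (contDiffOn_prod fun i _ => hA (σ i) i)

lemma contDiffOn_matrix_adjugate [DecidableEq ι] {A : E → Matrix ι ι ℝ}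
    (hA : ∀ i j, ContDiffOn ℝ k (fun y => A y i j) U) (i j : ι) :
    ContDiffOn ℝ k (fun y => (A y).adjugate i j) U := by
  simp only [adjugate_apply]
  refine contDiffOn_matrix_det fun a b => ?_
  by_cases h : a = j
  · simpa only [updateRow_apply, if_pos h] using contDiffOn_const
  · simpa only [updateRow_apply, if_neg h] using hA a b

lemma contDiffOn_matrix_inv [DecidableEq ι] {A : E → Matrix ι ι ℝ}
    (hA : ∀ i j, ContDiffOn ℝ k (fun y => A y i j) U) (hdet : ∀ y ∈ U, (A y).det ≠ 0)
    (i j : ι) : ContDiffOn ℝ k (fun y => (A y)⁻¹ i j) U := by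
  simp only [inv_def, Ring.inverse_eq_inv', Matrix.smul_apply, smul_eq_mul]
  exact ((contDiffOn_matrix_det hA).inv hdet).mul (contDiffOn_matrix_adjugate hA i j)

lemma contDiffOn_transpose_mul_self {Y : ι → E → Pt n} (hY : ∀ i, ContDiffOn ℝ k (Y i) U)
    (a b : Fin n) : ContDiffOn ℝ k (fun y => ((of fun i => Y i y)ᵀ * of fun i => Y i y) a b) U := by
  simp only [mul_apply, transpose_apply, of_apply]
  exact ContDiffOn.sum fun i _ => (contDiffOn_pi.1 (hY i) a).mul (contDiffOn_pi.1 (hY i) b)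

lemma exists_contDiffOn_coeffs {Y : ι → E → Pt n} (hY : ∀ i, ContDiffOn ℝ k (Y i) U)
    (hspan : ∀ y ∈ U, Submodule.span ℝ (Set.range fun i => Y i y) = ⊤) {Z : E → Pt n}
    (hZ : ContDiffOn ℝ k Z U) :
    ∃ a : ι → E → ℝ, (∀ i, ContDiffOn ℝ k (a i) U) ∧ ∀ y ∈ U, Z y = ∑ i, a i y • Y i y := by
  have hdet : ∀ y ∈ U, ((of fun i => Y i y)ᵀ * of fun i => Y i y).det ≠ 0 := fun y hy =>
    span_eq_top_iff_det_ne_zero.1 (hspan y hy)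
  refine ⟨fun i y => ((of fun i => Y i y) *ᵥ
    (((of fun i => Y i y)ᵀ * of fun i => Y i y)⁻¹ *ᵥ Z y)) i, fun i => ?_,
    fun y hy => eq_sum_smul_of_det_ne_zero (hdet y hy) (Z y)⟩
  have hinv := contDiffOn_matrix_inv (contDiffOn_transpose_mul_self hY) hdet
  simp only [mulVec, dotProduct, of_apply]
  exact ContDiffOn.sum fun a _ => (contDiffOn_pi.1 (hY i) a).mul <|
    ContDiffOn.sum fun b _ => (hinv a b).mul (contDiffOn_pi.1 hZ b)

end Frames

section Spanning

open Matrix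

variable {n : ℕ}

lemma isOpen_setOf_span_eq_top {ι : Type*} [Fintype ι] {Ω : Set (Pt n)} (hΩ : IsOpen Ω)
    {Y : ι → VF n} (hY : ∀ i, ContinuousOn (Y i) Ω) :
    IsOpen {y ∈ Ω | Submodule.span ℝ (Set.range fun i => Y i y) = ⊤} := by
  have hdet : ContinuousOn (fun y => ((of fun i => Y i y)ᵀ * of fun i => Y i y).det) Ω :=
    (contDiffOn_matrix_det (contDiffOn_transpose_mul_self
      fun i => contDiffOn_zero.2 (hY i))).continuousOn
  simp only [span_eq_top_iff_det_ne_zero]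
  exact hdet.isOpen_inter_preimage hΩ isOpen_compl_singleton

lemma exists_finset_span_image_eq_top {α M : Type*} [AddCommGroup M] [Module ℝ M]
    [FiniteDimensional ℝ M] {T : Set α} {f : α → M} (h : Submodule.span ℝ (f '' T) = ⊤) :
    ∃ P : Finset α, ↑P ⊆ T ∧ Submodule.span ℝ (f '' ↑P) = ⊤ := by
  obtain ⟨t, htT, -, ht, -⟩ := Submodule.exists_finset_span_eq_linearIndepOn ℝ (f '' T)
  obtain ⟨P, hPT, rfl⟩ := Finset.subset_set_image_iff.1 htT
  exact ⟨P, hPT, by rw [← Finset.coe_image, ht, h]⟩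

/-- Spanning by a finite family of continuous fields is an open condition, and these open sets
are directed by inclusion of the families; compactness of `K` then selects one of them. -/
lemma IsCompact.exists_finset_span_eq_top {α : Type*} {T : Set α} {Y : α → VF n}
    {Ω K : Set (Pt n)} (hΩ : IsOpen Ω) (hK : IsCompact K) (hKΩ : K ⊆ Ω)
    (hY : ∀ a ∈ T, ContinuousOn (Y a) Ω)
    (hspan : ∀ x ∈ K, Submodule.span ℝ ((fun a => Y a x) '' T) = ⊤) :
    ∃ P : Finset α, ↑P ⊆ T ∧ ∃ U : Set (Pt n), IsOpen U ∧ K ⊆ U ∧ U ⊆ Ω ∧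
      ∀ y ∈ U, Submodule.span ℝ ((fun a => Y a y) '' ↑P) = ⊤ := by
  let W : {P : Finset α // ↑P ⊆ T} → Set (Pt n) := fun P =>
    {y ∈ Ω | Submodule.span ℝ ((fun a => Y a y) '' ↑P.1) = ⊤}
  have hWopen : ∀ P, IsOpen (W P) := fun P => by
    simpa only [W, Set.image_eq_range] using
      isOpen_setOf_span_eq_top hΩ fun a : ↥(P.1 : Set α) => hY a (P.2 a.2)
  have hcover : K ⊆ ⋃ P, W P := fun x hx => by
    obtain ⟨P, hPT, hP⟩ := exists_finset_span_image_eq_top (hspan x hx)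
    exact Set.mem_iUnion.2 ⟨⟨P, hPT⟩, hKΩ hx, hP⟩
  have hdir : Directed (· ⊆ ·) W := fun P Q =>
    ⟨⟨P.1 ∪ Q.1, by simpa using ⟨P.2, Q.2⟩⟩,
      fun y hy => ⟨hy.1, top_unique <| hy.2.ge.trans <| Submodule.span_mono <|
        Set.image_mono (Finset.coe_subset.2 Finset.subset_union_left)⟩,
      fun y hy => ⟨hy.1, top_unique <| hy.2.ge.trans <| Submodule.span_mono <|
        Set.image_mono (Finset.coe_subset.2 Finset.subset_union_right)⟩⟩
  have : Nonempty {P : Finset α // ↑P ⊆ T} := ⟨⟨∅, by simp⟩⟩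
  obtain ⟨P, hKP⟩ := hK.elim_directed_cover W hWopen hcover hdir
  exact ⟨P.1, P.2, W P, hWopen P, hKP, fun y hy => hy.1, fun y hy => hy.2⟩

end Spanning

section Control

variable {n ν : ℕ} {Ω Ω' U : Set (Pt n)}

lemma smoothControlsPair_self (hΩ : IsOpen Ω) (hK : IsCompact (closure Ω'))
    (hKΩ : closure Ω' ⊆ Ω) (p : VF n × (Fin ν → ℝ)) :
    SmoothControlsPair (fun _ : Fin 1 => p.1) (fun _ => p.2) p Ω' Ω :=
  smoothControlsH_of_eq_sum hΩ hK hKΩ subset_rfl (fun _ _ => 1) (fun _ => contDiffOn_const)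
    (fun _ _ => 1) (by simp) (by simp)

lemma setSmoothControlsPair_of_mem (hΩ : IsOpen Ω) (hK : IsCompact (closure Ω'))
    (hKΩ : closure Ω' ⊆ Ω) {T : Set (VF n × (Fin ν → ℝ))} {p : VF n × (Fin ν → ℝ)}
    (hp : p ∈ T) : SetSmoothControlsPair T p Ω' Ω :=
  ⟨1, _, _, fun _ => hp, smoothControlsPair_self hΩ hK hKΩ p⟩

lemma smoothControlsPair_of_span {q : ℕ} (hU : IsOpen U) (hK : IsCompact (closure Ω'))
    (hKU : closure Ω' ⊆ U) (hUΩ : U ⊆ Ω) {Y : Fin q → VF n} {dY : Fin q → Fin ν → ℝ}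
    (hY : ∀ i, ContDiffOn ℝ (⊤ : ℕ∞) (Y i) U)
    (hspan : ∀ y ∈ U, Submodule.span ℝ (Set.range fun i => Y i y) = ⊤)
    {p : VF n × (Fin ν → ℝ)} (hp : ContDiffOn ℝ (⊤ : ℕ∞) p.1 U)
    (hdY : ∀ i, 0 ≤ dY i ∧ dY i ≤ p.2) : SmoothControlsPair Y dY p Ω' Ω := by
  obtain ⟨a, ha, hrep⟩ := exists_contDiffOn_coeffs hY hspan hp
  refine smoothControlsH_of_eq_sum hU hK hKU hUΩ a ha (fun δ i => dpow δ (p.2 - dY i))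
    (fun δ hδ i => ?_) (fun δ hδ y hy => ?_)
  · rw [abs_of_nonneg (dpow_nonneg fun μ => (hδ μ).1)]
    exact dpow_le_one hδ (sub_nonneg.2 (hdY i).2)
  · rw [hrep y hy, Finset.smul_sum]
    refine Finset.sum_congr rfl fun i _ => ?_
    have hsplit : dpow δ p.2 = dpow δ (p.2 - dY i) * dpow δ (dY i) := by
      rw [← dpow_add (fun μ => (hδ μ).1) (sub_nonneg.2 (hdY i).2) (hdY i).1, sub_add_cancel]
    rw [smul_smul, smul_smul, hsplit]
    congr 1
    ring

lemma setSmoothControlsPair_of_span {T : Set (VF n × (Fin ν → ℝ))}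
    {P : Finset (VF n × (Fin ν → ℝ))} (hPT : ↑P ⊆ T) (hU : IsOpen U)
    (hK : IsCompact (closure Ω')) (hKU : closure Ω' ⊆ U) (hUΩ : U ⊆ Ω)
    (hP : ∀ q ∈ P, ContDiffOn ℝ (⊤ : ℕ∞) q.1 U)
    (hspan : ∀ y ∈ U, Submodule.span ℝ ((fun q : VF n × (Fin ν → ℝ) => q.1 y) '' ↑P) = ⊤)
    {p : VF n × (Fin ν → ℝ)} (hp : ContDiffOn ℝ (⊤ : ℕ∞) p.1 U)
    (hdeg : ∀ q ∈ P, 0 ≤ q.2 ∧ q.2 ≤ p.2) : SetSmoothControlsPair T p Ω' Ω := by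
  let e := P.equivFin
  refine ⟨P.card, fun i => (e.symm i).1.1, fun i => (e.symm i).1.2, fun i => hPT (e.symm i).2,
    smoothControlsPair_of_span hU hK hKU hUΩ (fun i => hP _ (e.symm i).2) (fun y hy => ?_) hp
      (fun i => hdeg _ (e.symm i).2)⟩
  rw [← hspan y hy, Set.image_eq_range]
  exact congrArg _ (e.symm.surjective.range_comp fun q : P => q.1.1 y)

end Control

section LieClosure

variable {n ν : ℕ} {S : Set (VF n × (Fin ν → ℝ))}

lemma contDiffOn_vbracket {U : Set (Pt n)} (hU : IsOpen U) {V W : VF n}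
    (hV : ContDiffOn ℝ (⊤ : ℕ∞) V U) (hW : ContDiffOn ℝ (⊤ : ℕ∞) W U) :
    ContDiffOn ℝ (⊤ : ℕ∞) (vbracket V W) U :=
  ((hW.fderiv_of_isOpen hU (by simp)).clm_apply hV).sub
    ((hV.fderiv_of_isOpen hU (by simp)).clm_apply hW)

lemma genLie.contDiffOn_fst {U : Set (Pt n)} (hU : IsOpen U)
    (hS : ∀ p ∈ S, ContDiffOn ℝ (⊤ : ℕ∞) p.1 U) {p : VF n × (Fin ν → ℝ)} (hp : genLie S p) :
    ContDiffOn ℝ (⊤ : ℕ∞) p.1 U := by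
  induction hp with
  | base p hp => exact hS p hp
  | br p q _ _ ihp ihq => exact contDiffOn_vbracket hU ihp ihq

lemma genLie.snd_nonneg (hS : ∀ p ∈ S, 0 ≤ p.2) {p : VF n × (Fin ν → ℝ)} (hp : genLie S p) :
    0 ≤ p.2 := by
  induction hp with
  | base p hp => exact hS p hp
  | br p q _ _ ihp ihq => exact add_nonneg ihp ihq

lemma lieGen.exists_mem_piMu {μ : Fin ν} {X : VF n}
    (hX : lieGen {X : VF n | ∃ d, (X, d) ∈ S ∧ ∀ μ', μ' ≠ μ → d μ' = 0} X) :
    ∃ d, (X, d) ∈ piMu μ (LSet S) := by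
  induction hX with
  | base X hX =>
    obtain ⟨d, hd, hμ⟩ := hX
    exact ⟨d, genLie.base _ hd, hμ⟩
  | br X Y _ _ ihX ihY =>
    obtain ⟨d, hd, hdμ⟩ := ihX
    obtain ⟨e, he, heμ⟩ := ihY
    refine ⟨d + e, genLie.br (X, d) (Y, e) hd he, fun μ' h => ?_⟩
    simp only at hdμ heμ ⊢
    rw [Pi.add_apply, hdμ μ' h, heμ μ' h, add_zero]

lemma Hormander.span_piMu_eq_top {μ : Fin ν} {Ω : Set (Pt n)}
    (h : Hormander {X : VF n | ∃ d, (X, d) ∈ S ∧ ∀ μ', μ' ≠ μ → d μ' = 0} Ω) :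
    ∀ x ∈ Ω, Submodule.span ℝ ((fun p : VF n × (Fin ν → ℝ) => p.1 x) '' piMu μ (LSet S)) = ⊤ := by
  intro x hx
  rw [eq_top_iff, ← h x hx]
  refine Submodule.span_mono ?_
  rintro _ ⟨X, hX, rfl⟩
  obtain ⟨d, hd⟩ := hX.exists_mem_piMu
  exact ⟨(X, d), hd, rfl⟩

end LieClosure

section Finiteness

variable {n ν : ℕ} {S : Set (VF n × (Fin ν → ℝ))} {M : ℝ}

lemma Set.Finite.exists_pos_le {α : Type*} {s : Set α} (hs : s.Finite) {f : α → ℝ}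
    (hf : ∀ a ∈ s, 0 < f a) : ∃ ε > 0, ∀ a ∈ s, ε ≤ f a := by
  rcases s.eq_empty_or_nonempty with rfl | hne
  · exact ⟨1, one_pos, by simp⟩
  · obtain ⟨a, ha, hmin⟩ := Set.exists_min_image s f hs hne
    exact ⟨f a, hf a ha, hmin⟩

lemma abs_le_of_abs_add_le {d e : Fin ν → ℝ} (hd : 0 ≤ d) (he : 0 ≤ e) (h : ∀ μ, |(d + e) μ| ≤ M) :
    ∀ μ, |d μ| ≤ M := fun μ => by
  have := h μ
  rw [Pi.add_apply, abs_of_nonneg (add_nonneg (hd μ) (he μ))] at this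
  rw [abs_of_nonneg (hd μ)]
  linarith [show (0 : ℝ) ≤ e μ from he μ]

variable {ε : ℝ}

lemma genLie.le_sum_snd (hS : ∀ p ∈ S, 0 ≤ p.2)
    (hε : ∀ p ∈ S, (∀ μ, |p.2 μ| ≤ M) → ε ≤ ∑ μ, p.2 μ)
    {p : VF n × (Fin ν → ℝ)} (hp : genLie S p) (hpM : ∀ μ, |p.2 μ| ≤ M) :
    ε ≤ ∑ μ, p.2 μ := by
  induction hp with
  | base p hp => exact hε p hp hpM
  | br p q hp hq ihp _ =>
    have hq0 : 0 ≤ ∑ μ, q.2 μ := Finset.sum_nonneg fun μ _ => (hq.snd_nonneg hS μ : _)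
    simp only [Pi.add_apply, Finset.sum_add_distrib]
    linarith [ihp (abs_le_of_abs_add_le (hp.snd_nonneg hS) (hq.snd_nonneg hS) hpM)]

lemma bounded_LSet_subset_union_image2 (hS : ∀ p ∈ S, 0 ≤ p.2)
    (hε : ∀ p ∈ S, (∀ μ, |p.2 μ| ≤ M) → ε ≤ ∑ μ, p.2 μ) (t : ℝ) :
    {p ∈ LSet S | (∀ μ, |p.2 μ| ≤ M) ∧ ∑ μ, p.2 μ ≤ t + ε} ⊆
      {p ∈ S | ∀ μ, |p.2 μ| ≤ M} ∪
        Set.image2 (fun p q : VF n × (Fin ν → ℝ) => (vbracket p.1 q.1, p.2 + q.2))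
          {p ∈ LSet S | (∀ μ, |p.2 μ| ≤ M) ∧ ∑ μ, p.2 μ ≤ t}
          {p ∈ LSet S | (∀ μ, |p.2 μ| ≤ M) ∧ ∑ μ, p.2 μ ≤ t} := by
  rintro p ⟨hp, hpM, hpt⟩
  cases hp with
  | base _ hp => exact Or.inl ⟨hp, hpM⟩
  | br a b ha hb =>
    have haM := abs_le_of_abs_add_le (ha.snd_nonneg hS) (hb.snd_nonneg hS) hpM
    have hbM := abs_le_of_abs_add_le (hb.snd_nonneg hS) (ha.snd_nonneg hS)
      (by simpa only [add_comm] using hpM)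
    have hεa := ha.le_sum_snd hS hε haM
    have hεb := hb.le_sum_snd hS hε hbM
    simp only [Pi.add_apply, Finset.sum_add_distrib] at hpt
    exact Or.inr ⟨a, ⟨ha, haM, by linarith⟩, b, ⟨hb, hbM, by linarith⟩, rfl⟩

lemma finite_bounded_LSet (hS : ∀ p ∈ S, 0 ≤ p.2) (hne : ∀ p ∈ S, p.2 ≠ 0)
    (hfin : ∀ M : ℝ, {p ∈ S | ∀ μ, |p.2 μ| ≤ M}.Finite) (M : ℝ) :
    {p ∈ LSet S | ∀ μ, |p.2 μ| ≤ M}.Finite := by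
  obtain ⟨ε, hε, hεS⟩ := (hfin M).exists_pos_le (f := fun p => ∑ μ, p.2 μ) fun p hp =>
    (Finset.sum_nonneg fun μ _ => (hS p hp.1 μ : _)).lt_of_ne fun h => hne p hp.1 <|
      funext ((Finset.sum_eq_zero_iff_of_nonneg fun μ _ => (hS p hp.1 μ : _)).1 h.symm · (by simp))
  have hlevel : ∀ k : ℕ, {p ∈ LSet S | (∀ μ, |p.2 μ| ≤ M) ∧ ∑ μ, p.2 μ ≤ k * ε}.Finite := by
    intro k
    induction k with
    | zero =>
      refine Set.finite_empty.subset fun p ⟨hp, hpM, hp0⟩ => ?_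
      have := genLie.le_sum_snd hS (fun p hp hpM => hεS p ⟨hp, hpM⟩) hp hpM
      simp only [CharP.cast_eq_zero, zero_mul] at hp0
      linarith
    | succ k ih =>
      rw [Nat.cast_succ, add_one_mul]
      exact ((hfin M).union (ih.image2 _ ih)).subset
        (bounded_LSet_subset_union_image2 hS (fun p hp hpM => hεS p ⟨hp, hpM⟩) _)
  obtain ⟨K, hK⟩ := exists_nat_ge (ν * M / ε)
  refine (hlevel K).subset fun p ⟨hp, hpM⟩ => ⟨hp, hpM, ?_⟩
  calc ∑ μ, p.2 μ ≤ ∑ _μ : Fin ν, M := Finset.sum_le_sum fun μ _ => (le_abs_self _).trans (hpM μ)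
    _ = ν * M := by simp
    _ ≤ K * ε := (div_le_iff₀ hε).1 hK

end Finiteness

section PiMu

variable {n ν : ℕ} {T : Set (VF n × (Fin ν → ℝ))} {μ : Fin ν} {p : VF n × (Fin ν → ℝ)}

lemma abs_snd_le_of_mem_piMu (hp : p ∈ piMu μ T) (hp0 : 0 ≤ p.2) {M : ℝ} (hM : 0 ≤ M)
    (hpμ : p.2 μ ≤ M) (μ' : Fin ν) : |p.2 μ'| ≤ M := by
  rw [abs_of_nonneg (hp0 μ')]
  by_cases h : μ' = μ
  · exact h ▸ hpμ
  · exact (hp.2 μ' h).le.trans hM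

lemma snd_le_of_mem_piMu (hp : p ∈ piMu μ T) {d : Fin ν → ℝ} (hd : 0 ≤ d)
    (hpμ : p.2 μ ≤ d μ) : p.2 ≤ d := fun μ' => by
  by_cases h : μ' = μ
  · exact h ▸ hpμ
  · exact (hp.2 μ' h).le.trans (hd μ')

end PiMu

theorem stmt7_general {n ν : ℕ} (Ω Ω' : Set (Pt n)) (hΩ : IsOpen Ω)
    (hcl : closure Ω' ⊆ Ω) (hcpt : IsCompact (closure Ω'))
    (S : Set (VF n × (Fin ν → ℝ)))
    (hreg : ∀ p ∈ S, ContDiffOn ℝ (⊤ : ℕ∞) p.1 Ω ∧ (∀ μ, 0 ≤ p.2 μ) ∧ p.2 ≠ 0)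
    (hfin : ∀ M : ℝ, {p ∈ S | ∀ μ, |p.2 μ| ≤ M}.Finite)
    (hHor : ∀ μ : Fin ν,
      Hormander {X : VF n | ∃ d, (X, d) ∈ S ∧ ∀ μ', μ' ≠ μ → d μ' = 0} Ω) :
    ∃ M : ℝ, ∃ F : Set (VF n × (Fin ν → ℝ)),
      F = {p ∈ LSet S | ∀ μ, |p.2 μ| ≤ M} ∧ F.Finite ∧ F ⊆ LSet S ∧
      EquivSetsS F (LSet S) Ω' Ω := by
  have hS0 : ∀ p ∈ S, 0 ≤ p.2 := fun p hp => (hreg p hp).2.1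
  have hL0 : ∀ p ∈ LSet S, 0 ≤ p.2 := fun p hp => genLie.snd_nonneg hS0 hp
  have hLsmooth : ∀ p ∈ LSet S, ContDiffOn ℝ (⊤ : ℕ∞) p.1 Ω := fun p hp =>
    hp.contDiffOn_fst hΩ fun q hq => (hreg q hq).1
  choose P hP U hU hKU hUΩ hspan using fun μ => hcpt.exists_finset_span_eq_top hΩ hcl
    (fun p hp => (hLsmooth p hp.1).continuousOn) fun x hx => (hHor μ).span_piMu_eq_top x (hcl hx)
  obtain ⟨M, hM0, hPM⟩ : ∃ M : ℝ, 0 ≤ M ∧ ∀ μ, ∀ q ∈ P μ, q.2 μ ≤ M :=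
    ((Filter.eventually_ge_atTop 0).and <| Filter.eventually_all.2 fun μ =>
      (Filter.eventually_all_finset _).2 fun q _ => Filter.eventually_ge_atTop (q.2 μ)).exists
  refine ⟨M, _, rfl, finite_bounded_LSet hS0 (fun p hp => (hreg p hp).2.2) hfin M,
    Set.sep_subset _ _, fun p hp => ?_,
    fun p hp => setSmoothControlsPair_of_mem hΩ hcpt hcl hp.1⟩
  by_cases hpM : ∀ μ, |p.2 μ| ≤ M
  · exact setSmoothControlsPair_of_mem hΩ hcpt hcl ⟨hp, hpM⟩
  obtain ⟨μ, hμ⟩ := not_forall.1 hpM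
  rw [not_le, abs_of_nonneg (hL0 p hp μ)] at hμ
  have hPF : ↑(P μ) ⊆ {p ∈ LSet S | ∀ μ, |p.2 μ| ≤ M} := fun q hq =>
    ⟨(hP μ hq).1, abs_snd_le_of_mem_piMu (hP μ hq) (hL0 q (hP μ hq).1) hM0 (hPM μ q hq)⟩
  exact setSmoothControlsPair_of_span hPF (hU μ) hcpt (hKU μ) (hUΩ μ)
    (fun q hq => (hLsmooth q (hP μ hq).1).mono (hUΩ μ)) (hspan μ)
    ((hLsmooth p hp).mono (hUΩ μ)) fun q hq => ⟨hL0 q (hP μ hq).1,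
      snd_le_of_mem_piMu (hP μ hq) (hL0 p hp) ((hPM μ q hq).trans hμ.le)⟩

/-- Let `S ⊂ Γ(TΩ) × ([0,∞)^ν \ {0})` be such that for every `M` the
set `{(X,d) ∈ S : |d|_∞ ≤ M}` is finite, and suppose that for each `μ` the collection
`{X : (X,d) ∈ S, d_{μ'} = 0 ∀ μ' ≠ μ}` satisfies Hörmander's condition on `Ω`.  Then
`L(S)` is smoothly finitely generated on `Ω'`: there is a finite `F ⊆ L(S)` which smoothly
controls `L(S)` on `Ω'` and is smoothly controlled by `L(S)` on `Ω'`. -/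
theorem stmt7 {n ν : ℕ} (Ω Ω' : Set (Pt n)) (hΩ : IsOpen Ω) (hΩ' : IsOpen Ω')
    (hcl : closure Ω' ⊆ Ω) (hcpt : IsCompact (closure Ω'))
    (S : Set (VF n × (Fin ν → ℝ)))
    (hreg : ∀ p ∈ S, ContDiffOn ℝ (⊤ : ℕ∞) p.1 Ω ∧ (∀ μ, 0 ≤ p.2 μ) ∧ p.2 ≠ 0)
    (hfin : ∀ M : ℝ, {p ∈ S | ∀ μ, |p.2 μ| ≤ M}.Finite)
    (hHor : ∀ μ : Fin ν,
      Hormander {X : VF n | ∃ d, (X, d) ∈ S ∧ ∀ μ', μ' ≠ μ → d μ' = 0} Ω) :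
    ∃ M : ℝ, ∃ F : Set (VF n × (Fin ν → ℝ)),
      F = {p ∈ LSet S | ∀ μ, |p.2 μ| ≤ M} ∧ F.Finite ∧ F ⊆ LSet S ∧
      EquivSetsS F (LSet S) Ω' Ω :=
  stmt7_general Ω Ω' hΩ hcl hcpt S hreg hfin hHor
end
end

section
/- If F ⊂ Γ(TΩ) × 𝔡_ν is a finite set satisfying D(Ω′) (resp. D_s(Ω′)), with F = {(X_1,d_1),…,(X_q,d_q)}, then the parameterization γ_t(x) = exp(t_1 X_1 + ⋯ + t_q X_q) x on R^q, with dilations e_j = d_j, is linearly finitely generated (resp. smoothly linearly finitely generated) by F on Ω′. -/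
open MeasureTheory
open scoped BigOperators Classical

noncomputable section

/-!
For `W(t) = Σ_j t_j X_j` the first-order Taylor coefficients are exactly the `X_j`, with
degrees `d_j`, so `𝓕₀ = F` and the condition `𝒟(Ω')` (resp. `𝒟_s(Ω')`) on `𝓕₀` is the
hypothesis. Each `(X_i, d_i)` is controlled by `F` with the constant coefficients
`c_j = [j = i]`, and `W(δt) = Σ_j t_j δ^{d_j} X_j` is controlled with the coefficients
`c_j(t) = t_j`, all of whose derivatives are bounded by `max ‖t‖ 1`.
-/

section PartialDerivatives

variable {m : ℕ} {E : Type*} [NormedAddCommGroup E] [NormedSpace ℝ E]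

lemma pdv_continuousLinearMap (L : Pt m →L[ℝ] E) (j : Fin m) :
    pdv j L = fun _ => L (Pi.single j 1) := by
  funext x
  simp [pdv, L.fderiv]

lemma pdv_const (j : Fin m) (c : E) : pdv j (fun _ : Pt m => c) = fun _ => 0 := by
  funext x
  simp [pdv]

lemma md_mapsTo {P : Set (Pt m → E)} (h : ∀ j, Set.MapsTo (pdv j) P P) (α : Fin m → ℕ) :
    Set.MapsTo (md α) P P := by
  intro f hf
  unfold md
  induction List.finRange m with
  | nil => exact hf
  | cons j l ih => exact (h j).iterate (α j) ih

lemma foldr_iterate_pdv_single (k : Fin m) (f : Pt m → E) {l : List (Fin m)} (hl : l.Nodup) :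
    l.foldr (fun j g => (pdv j)^[(Pi.single k 1 : Fin m → ℕ) j] g) f =
      if k ∈ l then pdv k f else f := by
  induction l with
  | nil => simp
  | cons a l ih =>
    rw [List.nodup_cons] at hl
    rw [List.foldr_cons, ih hl.2]
    rcases eq_or_ne a k with rfl | hak
    · simp [hl.1]
    · simp [hak, hak.symm]

lemma md_single (k : Fin m) (f : Pt m → E) : md (Pi.single k 1) f = pdv k f := by
  simp [md, foldr_iterate_pdv_single k f (List.nodup_finRange m)]

end PartialDerivatives

lemma listD_mapsTo {n : ℕ} {P : Set (Pt n → ℝ)} (h : ∀ V, Set.MapsTo (vfD V) P P)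
    (L : List (VF n)) : Set.MapsTo (listD L) P P := by
  intro f hf
  induction L with
  | nil => exact hf
  | cons V L ih => exact h V ih

def boundedConstants (α : Type*) (C : ℝ) : Set (α → ℝ) :=
  {f | ∃ c, |c| ≤ C ∧ f = fun _ => c}

lemma abs_apply_le_of_mem_boundedConstants {α : Type*} {C : ℝ} {f : α → ℝ}
    (hf : f ∈ boundedConstants α C) (x : α) : |f x| ≤ C := by
  obtain ⟨c, hc, rfl⟩ := hf
  exact hc

lemma pdv_mapsTo_boundedConstants {m : ℕ} {C : ℝ} (hC : 0 ≤ C) (j : Fin m) :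
    Set.MapsTo (pdv j) (boundedConstants (Pt m) C) (boundedConstants (Pt m) C) := by
  rintro _ ⟨c, -, rfl⟩
  exact ⟨0, by simpa using hC, pdv_const j c⟩

lemma vfD_mapsTo_boundedConstants {n : ℕ} {C : ℝ} (hC : 0 ≤ C) (V : VF n) :
    Set.MapsTo (vfD V) (boundedConstants (Pt n) C) (boundedConstants (Pt n) C) := by
  rintro _ ⟨c, -, rfl⟩
  exact ⟨0, by simpa using hC, by funext x; simp [vfD]⟩

lemma abs_md_const_le {m : ℕ} (α : Fin m → ℕ) (c : ℝ) (y : Pt m) :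
    |md α (fun _ : Pt m => c) y| ≤ |c| :=
  abs_apply_le_of_mem_boundedConstants
    (md_mapsTo (pdv_mapsTo_boundedConstants (abs_nonneg c)) α ⟨c, le_rfl, rfl⟩) y

lemma abs_listD_const_le {n : ℕ} (L : List (VF n)) (c : ℝ) (y : Pt n) :
    |listD L (fun _ : Pt n => c) y| ≤ |c| :=
  abs_apply_le_of_mem_boundedConstants
    (listD_mapsTo (vfD_mapsTo_boundedConstants (abs_nonneg c)) L ⟨c, le_rfl, rfl⟩) y

lemma abs_md_coord_le {m : ℕ} (β : Fin m → ℕ) (i : Fin m) (t : Pt m) :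
    |md β (fun t' : Pt m => t' i) t| ≤ max ‖t‖ 1 := by
  have hmaps : ∀ j, Set.MapsTo (pdv j) (insert (fun t' : Pt m => t' i) (boundedConstants _ 1))
      (insert (fun t' : Pt m => t' i) (boundedConstants _ 1)) := by
    rintro j f (rfl | hf)
    · refine Or.inr ⟨(Pi.single j 1 : Pt m) i, ?_, pdv_continuousLinearMap (.proj i) j⟩
      by_cases hij : i = j <;> simp [hij]
    · exact Or.inr (pdv_mapsTo_boundedConstants zero_le_one j hf)
  rcases md_mapsTo hmaps β (Set.mem_insert _ _) with h | h
  · rw [h, ← Real.norm_eq_abs]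
    exact (norm_le_pi_norm t i).trans (le_max_left _ _)
  · exact (abs_apply_le_of_mem_boundedConstants h t).trans (le_max_right _ _)

lemma eq_single_of_sum_eq_one {m : ℕ} {α : Fin m → ℕ} (h : ∑ k, α k = 1) :
    ∃ k, α = Pi.single k 1 := by
  obtain ⟨k, hk⟩ := (Finsupp.sum_eq_one_iff (Finsupp.equivFunOnFinite.symm α)).1
    (by rwa [Finsupp.sum_fintype _ _ (fun _ => rfl)])
  refine ⟨k, ?_⟩
  simpa [← Finsupp.single_eq_pi_single] using congrArg Finsupp.equivFunOnFinite hk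

def linearParam {n q : ℕ} (X : Fin q → VF n) : Pt q → VF n := fun t x => ∑ j, t j • X j x

lemma taylorC_linearParam_single {n q : ℕ} (X : Fin q → VF n) (k : Fin q) :
    taylorC (linearParam X) (Pi.single k 1) = X k := by
  funext x
  have hlin : (fun t => linearParam X t x) =
      ⇑(Fintype.linearCombination ℝ (fun j => X j x)).toContinuousLinearMap := by
    funext t
    simp [linearParam, Fintype.linearCombination_apply]
  have hfact : mfact (Pi.single k 1 : Fin q → ℕ) = 1 := by
    simp [mfact, Pi.single_apply, apply_ite Nat.factorial]
  rw [taylorC, hfact, inv_one, one_smul, md_single, hlin, pdv_continuousLinearMap]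
  simp [Fintype.linearCombination_apply_single]

lemma degA_single {N ν : ℕ} (e : Fin N → Fin ν → ℝ) (k : Fin N) :
    degA e (Pi.single k 1) = e k := by
  funext μ
  simp [degA, Pi.single_apply, ite_mul]

lemma taylorF0_linearParam {n ν q : ℕ} (X : Fin q → VF n) (d : Fin q → Fin ν → ℝ)
    (hd : ∀ j, InD (d j)) :
    TaylorF0 (linearParam X) d = Set.range fun j => (X j, d j) := by
  ext p
  constructor
  · rintro ⟨α, hα, -, rfl⟩
    obtain ⟨k, rfl⟩ := eq_single_of_sum_eq_one hα
    exact ⟨k, by rw [taylorC_linearParam_single, degA_single]⟩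
  · rintro ⟨k, rfl⟩
    refine ⟨Pi.single k 1, by simp, degA_single d k ▸ hd k, ?_⟩
    rw [taylorC_linearParam_single, degA_single]

section Control

variable {n ν q : ℕ} (X : Fin q → VF n) (d : Fin q → Fin ν → ℝ) {Ω' Ω : Set (Pt n)}

lemma controlsPair_mem (i : Fin q) : ControlsPair X d (X i, d i) Ω' := by
  refine ⟨1, one_pos, fun _ _ j _ => if j = i then 1 else 0,
    fun _ _ _ _ => ⟨fun _ => continuousOn_const, fun _ _ => by simp [ite_smul]⟩,
    fun _ => ⟨1, fun _ _ _ _ _ _ _ y _ => (abs_listD_const_le _ _ y).trans ?_⟩⟩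
  split_ifs <;> simp

lemma smoothControlsPair_mem (hΩ : IsOpen Ω) (hcl : closure Ω' ⊆ Ω) (i : Fin q) :
    SmoothControlsPair X d (X i, d i) Ω' Ω := by
  obtain ⟨U, hU, hΩ'U, hUΩ⟩ := normal_exists_closure_subset isClosed_closure hΩ hcl
  refine ⟨U, hU, hΩ'U, hUΩ, fun _ j _ => if j = i then 1 else 0,
    fun _ _ _ => contDiffOn_const, fun _ _ _ _ => by simp [ite_smul],
    fun α => ⟨1, fun _ _ _ y _ => (abs_md_const_le α _ y).trans ?_⟩⟩
  split_ifs <;> simp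

lemma setControlsSet_range_self :
    SetControlsSet (Set.range fun j => (X j, d j)) (Set.range fun j => (X j, d j)) Ω' := by
  rintro _ ⟨i, rfl⟩
  exact ⟨q, X, d, fun j => ⟨j, rfl⟩, controlsPair_mem X d i⟩

lemma setSmoothControlsSet_range_self (hΩ : IsOpen Ω) (hcl : closure Ω' ⊆ Ω) :
    SetSmoothControlsSet (Set.range fun j => (X j, d j)) (Set.range fun j => (X j, d j))
      Ω' Ω := by
  rintro _ ⟨i, rfl⟩
  exact ⟨q, X, d, fun j => ⟨j, rfl⟩, smoothControlsPair_mem X d hΩ hcl i⟩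

lemma linearParam_dilVec (δ : Fin ν → ℝ) (t : Pt q) (x : Pt n) :
    linearParam X (dilVec d δ t) x = ∑ j, t j • (dpow δ (d j) • X j x) := by
  simp [linearParam, dilVec, smul_smul, mul_comm]

lemma controlsParamH_linearParam : ControlsParamH X d (linearParam X) d Ω' := by
  refine ⟨1, one_pos, 1, one_pos, fun _ _ j t _ => t j,
    fun δ _ _ _ t _ x _ => linearParam_dilVec X d δ t x,
    fun _ => ⟨1, fun _ _ _ _ j _ β _ t ht x _ => ?_⟩⟩
  calc _ ≤ |md β (fun t' : Pt q => t' j) t| := abs_listD_const_le _ _ x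
    _ ≤ max ‖t‖ 1 := abs_md_coord_le β j t
    _ = 1 := max_eq_right ht.le

lemma smoothControlsParamH_linearParam (hΩ : IsOpen Ω) (hcl : closure Ω' ⊆ Ω) :
    SmoothControlsParamH X d (linearParam X) d Ω' Ω := by
  obtain ⟨U, hU, hΩ'U, hUΩ⟩ := normal_exists_closure_subset isClosed_closure hΩ hcl
  refine ⟨U, hU, hΩ'U, hUΩ, 1, one_pos, fun _ j t _ => t j,
    fun _ _ j => ((contDiff_apply ℝ ℝ j).comp contDiff_fst).contDiffOn,
    fun δ _ t _ y _ => linearParam_dilVec X d δ t y,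
    fun α β => ⟨1, fun _ _ j t ht y _ => ?_⟩⟩
  calc _ ≤ |md β (fun t' : Pt q => t' j) t| := abs_md_const_le α _ y
    _ ≤ max ‖t‖ 1 := abs_md_coord_le β j t
    _ = 1 := max_eq_right ht.le

theorem paramLinFinGenBy_linearParam (hd : ∀ j, InD (d j))
    (hD : DCondSet (Set.range fun j => (X j, d j)) Ω') :
    ParamLinFinGenBy (linearParam X) d (Set.range fun j => (X j, d j)) Ω' := by
  rw [ParamLinFinGenBy, taylorF0_linearParam X d hd]
  exact ⟨hD, ⟨q, X, d, fun j => ⟨j, rfl⟩, controlsParamH_linearParam X d⟩,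
    setControlsSet_range_self X d, setControlsSet_range_self X d⟩

theorem paramSmoothLinFinGenBy_linearParam (hΩ : IsOpen Ω) (hcl : closure Ω' ⊆ Ω)
    (hd : ∀ j, InD (d j)) (hD : DsCondSet (Set.range fun j => (X j, d j)) Ω' Ω) :
    ParamSmoothLinFinGenBy (linearParam X) d (Set.range fun j => (X j, d j)) Ω' Ω := by
  rw [ParamSmoothLinFinGenBy, taylorF0_linearParam X d hd]
  exact ⟨hD, ⟨q, X, d, fun j => ⟨j, rfl⟩, smoothControlsParamH_linearParam X d hΩ hcl⟩,
    setSmoothControlsSet_range_self X d hΩ hcl, setSmoothControlsSet_range_self X d hΩ hcl⟩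

end Control

theorem stmt13_general {n ν q : ℕ} (Ω Ω' : Set (Pt n)) (hΩ : IsOpen Ω)
    (hcl : closure Ω' ⊆ Ω)
    (Y : Fin q → VF n) (dY : Fin q → Fin ν → ℝ)
    (hd : ∀ j, (∀ μ, 0 ≤ dY j μ) ∧ InD (dY j)) :
    (DCondSet (Set.range fun j => (Y j, dY j)) Ω' →
      ParamLinFinGenBy (fun t x => ∑ j, t j • Y j x) dY
        (Set.range fun j => (Y j, dY j)) Ω') ∧
    (DsCondSet (Set.range fun j => (Y j, dY j)) Ω' Ω →
      ParamSmoothLinFinGenBy (fun t x => ∑ j, t j • Y j x) dY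
        (Set.range fun j => (Y j, dY j)) Ω' Ω) :=
  ⟨paramLinFinGenBy_linearParam Y dY fun j => (hd j).2,
    paramSmoothLinFinGenBy_linearParam Y dY hΩ hcl fun j => (hd j).2⟩

/-- If `F = {(X₁,d₁),…,(X_q,d_q)} ⊂ Γ(TΩ) × 𝔡_ν` satisfies `𝒟(Ω')`
(resp. `𝒟_s(Ω')`), then the parameterization `γ_t(x) = exp(t₁X₁+⋯+t_qX_q)x` on `ℝ^q`
with dilations `e_j = d_j` — whose corresponding vector field parameterization is
`W(t,x) = Σ_j t_j X_j(x)`, encoded by `hW` — is linearly finitely generated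
(resp. smoothly linearly finitely generated) by `F` on `Ω'`. -/
theorem stmt13 {n ν q : ℕ} (Ω Ω' : Set (Pt n)) (hΩ : IsOpen Ω) (hΩ' : IsOpen Ω')
    (hcl : closure Ω' ⊆ Ω) (hcpt : IsCompact (closure Ω'))
    (Y : Fin q → VF n) (dY : Fin q → Fin ν → ℝ)
    (hreg : ∀ j, ContDiffOn ℝ (⊤ : ℕ∞) (Y j) Ω)
    (hd : ∀ j, (∀ μ, 0 ≤ dY j μ) ∧ InD (dY j))
    (ρ : ℝ) (hρ : 0 < ρ)
    (γ : Pt q → Pt n → Pt n) (hγ0 : ∀ x, γ 0 x = x)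
    (hW : ∀ t : Pt q, ∀ x : Pt n, ‖t‖ < ρ → x ∈ Ω →
      HasDerivAt (fun ε : ℝ => γ (ε • t) x) (∑ j, t j • Y j (γ t x)) 1) :
    (DCondSet (Set.range fun j => (Y j, dY j)) Ω' →
      ParamLinFinGenBy (fun t x => ∑ j, t j • Y j x) dY
        (Set.range fun j => (Y j, dY j)) Ω') ∧
    (DsCondSet (Set.range fun j => (Y j, dY j)) Ω' Ω →
      ParamSmoothLinFinGenBy (fun t x => ∑ j, t j • Y j x) dY
        (Set.range fun j => (Y j, dY j)) Ω' Ω) :=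
  stmt13_general Ω Ω' hΩ hcl Y dY hd

end
end
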